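/- Assume P is uniformly elliptic with constant α > 0 (ξ·P(x)ξ ≥ α|ξ|² for a.e. x ∈ Ω and all ξ ∈ ℝ^m), |r_k(x)| ≤ R_k a.e. on Ω with B = (Σ_k R_k²)^{1/2}, q1(x) ≥ α/2 + B²/(2α) for a.e. x ∈ Ω, and |q1(x)| ≤ Q1, |q2(x)| ≤ Q2 a.e. Then there exists a constant C ≥ 0, depending only on m, α, M, R_1,…,R_m, Q1 and Q2, with the following property: for all u1, u2, u1h, u2h, w1, w2 ∈ C¹_c(Ω) satisfying the Galerkin orthogonality relation a((u1 − u1h, u2 − u2h), (u1h − w1, u2h − w2)) = 0, one has ‖u1 − u1h‖₁² + ‖u2 − u2h‖₁² ≤ C (‖u1 − w1‖₁² + ‖u2 − w2‖₁²). -/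

import Mathlib

open MeasureTheory Matrix

/-- The gradient of `u : ℝ^m → ℝ` at `x`, as the vector of partial derivatives. -/
noncomputable def grad (m : ℕ) (u : (Fin m → ℝ) → ℝ) (x : Fin m → ℝ) : Fin m → ℝ :=
  fun i => fderiv ℝ u x (Pi.single i 1)

/-- `u ∈ C¹_c(Ω)`: continuously differentiable with compact support contained in `Ω`. -/
def C1c (m : ℕ) (Ω : Set (Fin m → ℝ)) (u : (Fin m → ℝ) → ℝ) : Prop :=
  ContDiff ℝ 1 u ∧ HasCompactSupport u ∧ tsupport u ⊆ Ω

/-- `‖u‖₀ = (∫_Ω u²)^(1/2)`. -/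
noncomputable def normL2 (m : ℕ) (Ω : Set (Fin m → ℝ)) (u : (Fin m → ℝ) → ℝ) : ℝ :=
  Real.sqrt (∫ x in Ω, (u x) ^ 2)

/-- `|u|₁ = (∫_Ω |∇u|²)^(1/2)`. -/
noncomputable def semiH1 (m : ℕ) (Ω : Set (Fin m → ℝ)) (u : (Fin m → ℝ) → ℝ) : ℝ :=
  Real.sqrt (∫ x in Ω, ∑ i, (grad m u x i) ^ 2)

/-- `‖u‖₁ = (‖u‖₀² + |u|₁²)^(1/2)`. -/
noncomputable def normH1 (m : ℕ) (Ω : Set (Fin m → ℝ)) (u : (Fin m → ℝ) → ℝ) : ℝ :=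
  Real.sqrt ((normL2 m Ω u) ^ 2 + (semiH1 m Ω u) ^ 2)

/-- The bilinear form of the coupled elliptic system:
`a(u,v) = ∫_Ω [∇v1·P∇u1 + ∇v2·P∇u2] + ∫_Ω [v1 (R·∇u1) + v2 (R·∇u2)]
        + ∫_Ω [q1 u1 v1 + q2 u2 v1 + q1 u2 v2 − q2 u1 v2]`. -/
noncomputable def aForm (m : ℕ) (Ω : Set (Fin m → ℝ))
    (P : (Fin m → ℝ) → Matrix (Fin m) (Fin m) ℝ)
    (Rv : (Fin m → ℝ) → Fin m → ℝ) (q1 q2 : (Fin m → ℝ) → ℝ)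
    (u1 u2 v1 v2 : (Fin m → ℝ) → ℝ) : ℝ :=
  (∫ x in Ω, (grad m v1 x ⬝ᵥ (P x).mulVec (grad m u1 x)
      + grad m v2 x ⬝ᵥ (P x).mulVec (grad m u2 x)))
  + (∫ x in Ω, (v1 x * (Rv x ⬝ᵥ grad m u1 x) + v2 x * (Rv x ⬝ᵥ grad m u2 x)))
  + (∫ x in Ω, (q1 x * u1 x * v1 x + q2 x * u2 x * v1 x
      + q1 x * u2 x * v2 x - q2 x * u1 x * v2 x))


/-! Céa's argument. Put `e = u - uh` and `z = u - w`, so that `uh - w = z - e` and Galerkin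
orthogonality reads `a(e, e) = a(e, z)`. Pointwise, ellipticity of `P` and the lower bound on `q1`
absorb the drift term of `a(e, e)` by Young's inequality, while the skew `q2`-coupling cancels;
hence `a(e, e) ≥ α/2 (‖e1‖₁² + ‖e2‖₁²)`. Young's inequality on each of the eight terms of `a(e, z)`
gives `a(e, z) ≤ α/4 (‖e1‖₁² + ‖e2‖₁²) + 2Γ/α (‖z1‖₁² + ‖z2‖₁²)` with
`Γ = m²M² + Σ R_k² + Q1² + Q2²`, so `C = 8Γ/α²` works. -/

open Finset

variable {m : ℕ}

theorem le_mul_add_div_of_sq_le_mul {t X Y ε : ℝ} (hX : 0 ≤ X) (hY : 0 ≤ Y) (hε : 0 < ε)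
    (h : t ^ 2 ≤ X * Y) : t ≤ ε * X + Y / (4 * ε) := by
  refine le_of_sq_le_sq ?_ (by positivity)
  have hsq : (ε * X + Y / (4 * ε)) ^ 2 = (ε * X - Y / (4 * ε)) ^ 2 + X * Y := by
    field_simp
    ring
  nlinarith [sq_nonneg (ε * X - Y / (4 * ε))]

theorem sq_le_sq_of_abs_le {a b : ℝ} (h : |a| ≤ b) : a ^ 2 ≤ b ^ 2 :=
  sq_le_sq.mpr (h.trans (le_abs_self b))

theorem sq_dotProduct_mulVec_le {A : Matrix (Fin m) (Fin m) ℝ} {M : ℝ} (hA : ∀ i j, |A i j| ≤ M)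
    (g h : Fin m → ℝ) :
    (g ⬝ᵥ A *ᵥ h) ^ 2 ≤ (m ^ 2 * M ^ 2) * ((∑ i, g i ^ 2) * ∑ j, h j ^ 2) := by
  -- Cauchy–Schwarz over the index pairs `(i, j)`
  have hsum : g ⬝ᵥ A *ᵥ h = ∑ p ∈ univ ×ˢ univ, A p.1 p.2 * (g p.1 * h p.2) := by
    simp only [dotProduct, mulVec, sum_product, mul_sum]
    exact sum_congr rfl fun _ _ => sum_congr rfl fun _ _ => by ring
  have hA2 : ∑ p ∈ univ ×ˢ univ, A p.1 p.2 ^ 2 ≤ m ^ 2 * M ^ 2 := by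
    calc ∑ p ∈ univ ×ˢ univ, A p.1 p.2 ^ 2 ≤ ∑ _p ∈ (univ : Finset (Fin m × Fin m)), M ^ 2 :=
          sum_le_sum fun p _ => sq_le_sq_of_abs_le (hA p.1 p.2)
      _ = m ^ 2 * M ^ 2 := by simp [sq]
  have hgh : ∑ p ∈ univ ×ˢ univ, (g p.1 * h p.2) ^ 2 = (∑ i, g i ^ 2) * ∑ j, h j ^ 2 := by
    simp only [sum_product, sum_mul_sum, mul_pow]
  rw [hsum, ← hgh]
  exact (sum_mul_sq_le_sq_mul_sq _ _ _).trans
    (mul_le_mul_of_nonneg_right hA2 (sum_nonneg fun _ _ => sq_nonneg _))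

theorem sq_dotProduct_le {r R : Fin m → ℝ} (hr : ∀ k, |r k| ≤ R k) (g : Fin m → ℝ) :
    (r ⬝ᵥ g) ^ 2 ≤ (∑ k, R k ^ 2) * ∑ k, g k ^ 2 :=
  (sum_mul_sq_le_sq_mul_sq _ _ _).trans <| mul_le_mul_of_nonneg_right
    (sum_le_sum fun k _ => sq_le_sq_of_abs_le (hr k))
    (sum_nonneg fun _ _ => sq_nonneg _)

theorem coercive_component {A : Matrix (Fin m) (Fin m) ℝ} {r R g : Fin m → ℝ} {α u c : ℝ}
    (hα : 0 < α) (hA : α * ∑ i, g i ^ 2 ≤ g ⬝ᵥ A *ᵥ g) (hr : ∀ k, |r k| ≤ R k)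
    (hc : α / 2 + (∑ k, R k ^ 2) / (2 * α) ≤ c) :
    α / 2 * (u ^ 2 + ∑ i, g i ^ 2) ≤ g ⬝ᵥ A *ᵥ g + u * (r ⬝ᵥ g) + c * u ^ 2 := by
  have hdrift := le_mul_add_div_of_sq_le_mul (t := -(u * (r ⬝ᵥ g)))
    (Y := (∑ k, R k ^ 2) * u ^ 2) (ε := α / 2) (sum_nonneg fun i _ => sq_nonneg (g i))
    (by positivity) (by positivity) (by nlinarith [sq_dotProduct_le hr g, sq_nonneg u])
  have hreact : (α / 2 + (∑ k, R k ^ 2) / (2 * α)) * u ^ 2 ≤ c * u ^ 2 :=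
    mul_le_mul_of_nonneg_right hc (sq_nonneg u)
  have hY : (∑ k, R k ^ 2) * u ^ 2 / (4 * (α / 2)) = (∑ k, R k ^ 2) / (2 * α) * u ^ 2 := by
    field_simp
    ring
  linarith

theorem bilinear_row_le {A : Matrix (Fin m) (Fin m) ℝ} {r R ge gz : Fin m → ℝ}
    {M Q Q' q q' e e' z ε : ℝ} (hε : 0 < ε) (hA : ∀ i j, |A i j| ≤ M) (hr : ∀ k, |r k| ≤ R k)
    (hq : |q| ≤ Q) (hq' : |q'| ≤ Q') :
    gz ⬝ᵥ A *ᵥ ge + z * (r ⬝ᵥ ge) + q * e * z + q' * e' * z ≤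
      ε * (2 * ∑ i, ge i ^ 2 + e ^ 2 + e' ^ 2) +
        (m ^ 2 * M ^ 2 + ∑ k, R k ^ 2 + Q ^ 2 + Q' ^ 2) / (4 * ε) * (z ^ 2 + ∑ i, gz i ^ 2) := by
  have hge : 0 ≤ ∑ i, ge i ^ 2 := sum_nonneg fun i _ => sq_nonneg (ge i)
  have hgz : 0 ≤ ∑ i, gz i ^ 2 := sum_nonneg fun i _ => sq_nonneg (gz i)
  have hstiff := le_mul_add_div_of_sq_le_mul (t := gz ⬝ᵥ A *ᵥ ge)
    (Y := m ^ 2 * M ^ 2 * ∑ i, gz i ^ 2) hge (by positivity) hε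
    (by nlinarith [sq_dotProduct_mulVec_le hA gz ge])
  have hdrift := le_mul_add_div_of_sq_le_mul (t := z * (r ⬝ᵥ ge))
    (Y := (∑ k, R k ^ 2) * z ^ 2) hge (by positivity) hε
    (by nlinarith [sq_dotProduct_le hr ge, sq_nonneg z])
  have hreact := le_mul_add_div_of_sq_le_mul (t := q * e * z) (Y := Q ^ 2 * z ^ 2)
    (sq_nonneg e) (by positivity) hε
    (by nlinarith [sq_le_sq_of_abs_le hq, sq_nonneg (e * z)])
  have hreact' := le_mul_add_div_of_sq_le_mul (t := q' * e' * z)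
    (Y := Q' ^ 2 * z ^ 2) (sq_nonneg e') (by positivity)
    hε (by nlinarith [sq_le_sq_of_abs_le hq', sq_nonneg (e' * z)])
  have hcoef : (m : ℝ) ^ 2 * M ^ 2 * ∑ i, gz i ^ 2 + (∑ k, R k ^ 2) * z ^ 2 + Q ^ 2 * z ^ 2 +
      Q' ^ 2 * z ^ 2 ≤ (m ^ 2 * M ^ 2 + ∑ k, R k ^ 2 + Q ^ 2 + Q' ^ 2) * (z ^ 2 + ∑ i, gz i ^ 2) := by
    nlinarith [mul_nonneg (by positivity : (0 : ℝ) ≤ m ^ 2 * M ^ 2) (sq_nonneg z),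
      mul_nonneg (by positivity : 0 ≤ ∑ k, R k ^ 2 + Q ^ 2 + Q' ^ 2) hgz]
  have hdiv := div_le_div_of_nonneg_right hcoef (by positivity : (0 : ℝ) ≤ 4 * ε)
  rw [add_div, add_div, add_div] at hdiv
  rw [div_mul_eq_mul_div]
  linarith

section Densities

variable (P : (Fin m → ℝ) → Matrix (Fin m) (Fin m) ℝ) (Rv : (Fin m → ℝ) → Fin m → ℝ)
  (q1 q2 : (Fin m → ℝ) → ℝ) (u1 u2 v1 v2 : (Fin m → ℝ) → ℝ) (x : Fin m → ℝ)

noncomputable def stiffnessDensity : ℝ :=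
  grad m v1 x ⬝ᵥ (P x).mulVec (grad m u1 x) + grad m v2 x ⬝ᵥ (P x).mulVec (grad m u2 x)

noncomputable def driftDensity : ℝ :=
  v1 x * (Rv x ⬝ᵥ grad m u1 x) + v2 x * (Rv x ⬝ᵥ grad m u2 x)

def reactionDensity : ℝ :=
  q1 x * u1 x * v1 x + q2 x * u2 x * v1 x + q1 x * u2 x * v2 x - q2 x * u1 x * v2 x

noncomputable def aDensity : ℝ :=
  stiffnessDensity P u1 u2 v1 v2 x + driftDensity Rv u1 u2 v1 v2 x +
    reactionDensity q1 q2 u1 u2 v1 v2 x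

end Densities

noncomputable def h1Density (u : (Fin m → ℝ) → ℝ) (x : Fin m → ℝ) : ℝ :=
  u x ^ 2 + ∑ i, grad m u x i ^ 2

section PointwiseForm

variable {P : (Fin m → ℝ) → Matrix (Fin m) (Fin m) ℝ} {Rv : (Fin m → ℝ) → Fin m → ℝ}
  {q1 q2 : (Fin m → ℝ) → ℝ} {u1 u2 v1 v2 w1 w2 : (Fin m → ℝ) → ℝ} {x : Fin m → ℝ}

theorem grad_sub {u v : (Fin m → ℝ) → ℝ} (hu : DifferentiableAt ℝ u x)
    (hv : DifferentiableAt ℝ v x) : grad m (u - v) x = grad m u x - grad m v x := by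
  funext i
  simp [grad, fderiv_sub hu hv]

theorem aDensity_sub_right (hv1 : DifferentiableAt ℝ v1 x) (hv2 : DifferentiableAt ℝ v2 x)
    (hw1 : DifferentiableAt ℝ w1 x) (hw2 : DifferentiableAt ℝ w2 x) :
    aDensity P Rv q1 q2 u1 u2 (v1 - w1) (v2 - w2) x =
      aDensity P Rv q1 q2 u1 u2 v1 v2 x - aDensity P Rv q1 q2 u1 u2 w1 w2 x := by
  simp only [aDensity, stiffnessDensity, driftDensity, reactionDensity, grad_sub hv1 hw1,
    grad_sub hv2 hw2, sub_dotProduct, Pi.sub_apply]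
  ring

theorem aDensity_self_ge {α : ℝ} {R : Fin m → ℝ} (hα : 0 < α)
    (hP : ∀ ξ : Fin m → ℝ, α * ∑ i, ξ i ^ 2 ≤ ξ ⬝ᵥ (P x).mulVec ξ) (hRv : ∀ k, |Rv x k| ≤ R k)
    (hq1 : α / 2 + (∑ k, R k ^ 2) / (2 * α) ≤ q1 x) :
    α / 2 * (h1Density u1 x + h1Density u2 x) ≤ aDensity P Rv q1 q2 u1 u2 u1 u2 x := by
  have h1 := coercive_component (u := u1 x) hα (hP (grad m u1 x)) hRv hq1
  have h2 := coercive_component (u := u2 x) hα (hP (grad m u2 x)) hRv hq1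
  simp only [aDensity, stiffnessDensity, driftDensity, reactionDensity, h1Density]
  linarith

theorem aDensity_le {ε M Q1 Q2 : ℝ} {R : Fin m → ℝ} (hε : 0 < ε) (hP : ∀ i j, |P x i j| ≤ M)
    (hRv : ∀ k, |Rv x k| ≤ R k) (hq1 : |q1 x| ≤ Q1) (hq2 : |q2 x| ≤ Q2) :
    aDensity P Rv q1 q2 u1 u2 v1 v2 x ≤
      2 * ε * (h1Density u1 x + h1Density u2 x) +
        (m ^ 2 * M ^ 2 + ∑ k, R k ^ 2 + Q1 ^ 2 + Q2 ^ 2) / (4 * ε) *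
          (h1Density v1 x + h1Density v2 x) := by
  have h1 := bilinear_row_le (ge := grad m u1 x) (gz := grad m v1 x) (e := u1 x) (e' := u2 x)
    (z := v1 x) hε hP hRv hq1 hq2
  -- the `v2`-terms of `aDensity` are its `v1`-terms with `(u1, u2)` replaced by `(u2, -u1)`
  have h2 := bilinear_row_le (ge := grad m u2 x) (gz := grad m v2 x) (e := u2 x) (e' := -u1 x)
    (z := v2 x) hε hP hRv hq1 hq2
  simp only [aDensity, stiffnessDensity, driftDensity, reactionDensity, h1Density]
  linarith

end PointwiseForm

section Integrals

variable {Ω : Set (Fin m → ℝ)} {μ : Measure (Fin m → ℝ)}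

theorem C1c.sub {u v : (Fin m → ℝ) → ℝ} (hu : C1c m Ω u) (hv : C1c m Ω v) :
    C1c m Ω (u - v) :=
  ⟨hu.1.sub hv.1, hu.2.1.sub hv.2.1, (closure_mono (Function.support_sub u v)).trans <|
    closure_union.subset.trans (Set.union_subset hu.2.2 hv.2.2)⟩

theorem C1c.differentiableAt {u : (Fin m → ℝ) → ℝ} (hu : C1c m Ω u) (x : Fin m → ℝ) :
    DifferentiableAt ℝ u x :=
  hu.1.differentiable one_ne_zero x

theorem C1c.memLp_top {u : (Fin m → ℝ) → ℝ} (hu : C1c m Ω u) (μ : Measure (Fin m → ℝ)) :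
    MemLp u ⊤ μ :=
  hu.1.continuous.memLp_top_of_hasCompactSupport hu.2.1 μ

theorem C1c.memLp_top_grad {u : (Fin m → ℝ) → ℝ} (hu : C1c m Ω u) (i : Fin m)
    (μ : Measure (Fin m → ℝ)) : MemLp (fun x => grad m u x i) ⊤ μ :=
  ((hu.1.continuous_fderiv one_ne_zero).clm_apply continuous_const).memLp_top_of_hasCompactSupport
    (hu.2.1.fderiv_apply ℝ _) μ

theorem memLp_top_dotProduct {f g : (Fin m → ℝ) → Fin m → ℝ}
    (hf : ∀ i, MemLp (fun x => f x i) ⊤ μ) (hg : ∀ i, MemLp (fun x => g x i) ⊤ μ) :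
    MemLp (fun x => f x ⬝ᵥ g x) ⊤ μ :=
  memLp_finsetSum _ fun i _ => (hg i).mul (hf i)

structure LinftyCoeffs (μ : Measure (Fin m → ℝ)) (P : (Fin m → ℝ) → Matrix (Fin m) (Fin m) ℝ)
    (Rv : (Fin m → ℝ) → Fin m → ℝ) (q1 q2 : (Fin m → ℝ) → ℝ) : Prop where
  memLp_P : ∀ i j, MemLp (fun x => P x i j) ⊤ μ
  memLp_Rv : ∀ k, MemLp (fun x => Rv x k) ⊤ μ
  memLp_q1 : MemLp q1 ⊤ μ
  memLp_q2 : MemLp q2 ⊤ μ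

variable {P : (Fin m → ℝ) → Matrix (Fin m) (Fin m) ℝ} {Rv : (Fin m → ℝ) → Fin m → ℝ}
  {q1 q2 : (Fin m → ℝ) → ℝ} {u1 u2 v1 v2 : (Fin m → ℝ) → ℝ}

theorem LinftyCoeffs.of_ae_bound {M Q1 Q2 : ℝ} {R : Fin m → ℝ}
    (hPm : ∀ i j, Measurable fun x => P x i j) (hP : ∀ᵐ x ∂μ, ∀ i j, |P x i j| ≤ M)
    (hRvm : ∀ k, Measurable fun x => Rv x k) (hRv : ∀ᵐ x ∂μ, ∀ k, |Rv x k| ≤ R k)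
    (hq1m : Measurable q1) (hq2m : Measurable q2) (hq1 : ∀ᵐ x ∂μ, |q1 x| ≤ Q1)
    (hq2 : ∀ᵐ x ∂μ, |q2 x| ≤ Q2) : LinftyCoeffs μ P Rv q1 q2 where
  memLp_P i j := memLp_top_of_bound (hPm i j).aestronglyMeasurable M
    (by filter_upwards [hP] with x hx using hx i j)
  memLp_Rv k := memLp_top_of_bound (hRvm k).aestronglyMeasurable (R k)
    (by filter_upwards [hRv] with x hx using hx k)
  memLp_q1 := memLp_top_of_bound hq1m.aestronglyMeasurable Q1 hq1
  memLp_q2 := memLp_top_of_bound hq2m.aestronglyMeasurable Q2 hq2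

theorem memLp_stiffnessDensity (hP : ∀ i j, MemLp (fun x => P x i j) ⊤ μ) (hu1 : C1c m Ω u1)
    (hu2 : C1c m Ω u2) (hv1 : C1c m Ω v1) (hv2 : C1c m Ω v2) :
    MemLp (stiffnessDensity P u1 u2 v1 v2) ⊤ μ := by
  have hPu : ∀ {u}, C1c m Ω u → ∀ i, MemLp (fun x => (P x).mulVec (grad m u x) i) ⊤ μ :=
    fun hu i => memLp_top_dotProduct (hP i) (hu.memLp_top_grad · μ)
  exact (memLp_top_dotProduct (hv1.memLp_top_grad · μ) (hPu hu1)).add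
    (memLp_top_dotProduct (hv2.memLp_top_grad · μ) (hPu hu2))

theorem memLp_driftDensity (hRv : ∀ k, MemLp (fun x => Rv x k) ⊤ μ) (hu1 : C1c m Ω u1)
    (hu2 : C1c m Ω u2) (hv1 : C1c m Ω v1) (hv2 : C1c m Ω v2) :
    MemLp (driftDensity Rv u1 u2 v1 v2) ⊤ μ :=
  ((memLp_top_dotProduct hRv (hu1.memLp_top_grad · μ)).mul (hv1.memLp_top μ)).add
    ((memLp_top_dotProduct hRv (hu2.memLp_top_grad · μ)).mul (hv2.memLp_top μ))

theorem memLp_reactionDensity (hq1 : MemLp q1 ⊤ μ) (hq2 : MemLp q2 ⊤ μ) (hu1 : C1c m Ω u1)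
    (hu2 : C1c m Ω u2) (hv1 : C1c m Ω v1) (hv2 : C1c m Ω v2) :
    MemLp (reactionDensity q1 q2 u1 u2 v1 v2) ⊤ μ := by
  have hprod : ∀ {q u v : (Fin m → ℝ) → ℝ}, MemLp q ⊤ μ → C1c m Ω u → C1c m Ω v →
      MemLp (fun x => q x * u x * v x) ⊤ μ :=
    fun hq hu hv => (hv.memLp_top μ).mul (r := ⊤) ((hu.memLp_top μ).mul (r := ⊤) hq)
  exact (((hprod hq1 hu1 hv1).add (hprod hq2 hu2 hv1)).add (hprod hq1 hu2 hv2)).sub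
    (hprod hq2 hu1 hv2)

theorem LinftyCoeffs.memLp_aDensity (hc : LinftyCoeffs μ P Rv q1 q2)
    (hu1 : C1c m Ω u1) (hu2 : C1c m Ω u2) (hv1 : C1c m Ω v1) (hv2 : C1c m Ω v2) :
    MemLp (aDensity P Rv q1 q2 u1 u2 v1 v2) ⊤ μ :=
  ((memLp_stiffnessDensity hc.memLp_P hu1 hu2 hv1 hv2).add
    (memLp_driftDensity hc.memLp_Rv hu1 hu2 hv1 hv2)).add
    (memLp_reactionDensity hc.memLp_q1 hc.memLp_q2 hu1 hu2 hv1 hv2)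

end Integrals

section Form

variable {Ω : Set (Fin m → ℝ)} [IsFiniteMeasure (volume.restrict Ω)]
  {P : (Fin m → ℝ) → Matrix (Fin m) (Fin m) ℝ} {Rv : (Fin m → ℝ) → Fin m → ℝ}
  {q1 q2 : (Fin m → ℝ) → ℝ} {u1 u2 v1 v2 : (Fin m → ℝ) → ℝ}

theorem LinftyCoeffs.aForm_eq_integral (hc : LinftyCoeffs (volume.restrict Ω) P Rv q1 q2)
    (hu1 : C1c m Ω u1) (hu2 : C1c m Ω u2) (hv1 : C1c m Ω v1) (hv2 : C1c m Ω v2) :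
    aForm m Ω P Rv q1 q2 u1 u2 v1 v2 = ∫ x in Ω, aDensity P Rv q1 q2 u1 u2 v1 v2 x := by
  have hS := (memLp_stiffnessDensity hc.memLp_P hu1 hu2 hv1 hv2).integrable le_top
  have hD := (memLp_driftDensity hc.memLp_Rv hu1 hu2 hv1 hv2).integrable le_top
  have hR := (memLp_reactionDensity hc.memLp_q1 hc.memLp_q2 hu1 hu2 hv1 hv2).integrable le_top
  simp only [aDensity]
  rw [integral_add (hS.add hD : Integrable (fun x => _ + _) _) hR, integral_add hS hD]
  rfl

theorem LinftyCoeffs.aForm_sub_right {w1 w2 : (Fin m → ℝ) → ℝ}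
    (hc : LinftyCoeffs (volume.restrict Ω) P Rv q1 q2) (hu1 : C1c m Ω u1) (hu2 : C1c m Ω u2)
    (hv1 : C1c m Ω v1) (hv2 : C1c m Ω v2) (hw1 : C1c m Ω w1) (hw2 : C1c m Ω w2) :
    aForm m Ω P Rv q1 q2 u1 u2 (v1 - w1) (v2 - w2) =
      aForm m Ω P Rv q1 q2 u1 u2 v1 v2 - aForm m Ω P Rv q1 q2 u1 u2 w1 w2 := by
  rw [hc.aForm_eq_integral hu1 hu2 (hv1.sub hw1) (hv2.sub hw2), hc.aForm_eq_integral hu1 hu2 hv1 hv2,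
    hc.aForm_eq_integral hu1 hu2 hw1 hw2, ← integral_sub
      ((hc.memLp_aDensity hu1 hu2 hv1 hv2).integrable le_top)
      ((hc.memLp_aDensity hu1 hu2 hw1 hw2).integrable le_top)]
  congr 1 with x
  exact aDensity_sub_right (hv1.differentiableAt x) (hv2.differentiableAt x)
    (hw1.differentiableAt x) (hw2.differentiableAt x)

theorem C1c.integrable_sq {u : (Fin m → ℝ) → ℝ} (hu : C1c m Ω u) :
    Integrable (fun x => u x ^ 2) (volume.restrict Ω) := by
  have h : MemLp (fun x => u x * u x) ⊤ (volume.restrict Ω) :=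
    (hu.memLp_top _).mul (r := ⊤) (hu.memLp_top _)
  simpa only [sq] using h.integrable le_top

theorem C1c.integrable_sum_grad_sq {u : (Fin m → ℝ) → ℝ} (hu : C1c m Ω u) :
    Integrable (fun x => ∑ i, grad m u x i ^ 2) (volume.restrict Ω) := by
  have h : MemLp (fun x => ∑ i, grad m u x i * grad m u x i) ⊤ (volume.restrict Ω) :=
    memLp_finsetSum _ fun i _ => (hu.memLp_top_grad i _).mul (r := ⊤) (hu.memLp_top_grad i _)
  simpa only [sq] using h.integrable le_top

theorem C1c.integrable_h1Density {u : (Fin m → ℝ) → ℝ} (hu : C1c m Ω u) :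
    Integrable (h1Density u) (volume.restrict Ω) :=
  hu.integrable_sq.add hu.integrable_sum_grad_sq

theorem C1c.normH1_sq {u : (Fin m → ℝ) → ℝ} (hu : C1c m Ω u) :
    normH1 m Ω u ^ 2 = ∫ x in Ω, h1Density u x := by
  have h0 : 0 ≤ ∫ x in Ω, u x ^ 2 := integral_nonneg fun x => sq_nonneg _
  have h1 : 0 ≤ ∫ x in Ω, ∑ i, grad m u x i ^ 2 := integral_nonneg fun x => by positivity
  rw [normH1, normL2, semiH1, Real.sq_sqrt (by positivity), Real.sq_sqrt h0, Real.sq_sqrt h1,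
    ← integral_add hu.integrable_sq hu.integrable_sum_grad_sq]
  rfl

theorem LinftyCoeffs.aForm_self_ge {α : ℝ} {R : Fin m → ℝ}
    (hc : LinftyCoeffs (volume.restrict Ω) P Rv q1 q2) (hα : 0 < α)
    (hP : ∀ᵐ x ∂(volume.restrict Ω), ∀ ξ : Fin m → ℝ, α * ∑ i, ξ i ^ 2 ≤ ξ ⬝ᵥ (P x).mulVec ξ)
    (hRv : ∀ᵐ x ∂(volume.restrict Ω), ∀ k, |Rv x k| ≤ R k)
    (hq1 : ∀ᵐ x ∂(volume.restrict Ω), α / 2 + (∑ k, R k ^ 2) / (2 * α) ≤ q1 x)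
    (hu1 : C1c m Ω u1) (hu2 : C1c m Ω u2) :
    α / 2 * (normH1 m Ω u1 ^ 2 + normH1 m Ω u2 ^ 2) ≤ aForm m Ω P Rv q1 q2 u1 u2 u1 u2 := by
  have hH := hu1.integrable_h1Density.add hu2.integrable_h1Density
  rw [hu1.normH1_sq, hu2.normH1_sq, ← integral_add hu1.integrable_h1Density
    hu2.integrable_h1Density, ← integral_const_mul, hc.aForm_eq_integral hu1 hu2 hu1 hu2]
  refine integral_mono_ae (hH.const_mul _) ((hc.memLp_aDensity hu1 hu2 hu1 hu2).integrable le_top) ?_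
  filter_upwards [hP, hRv, hq1] with x hPx hRx hqx
  exact aDensity_self_ge hα hPx hRx hqx

theorem LinftyCoeffs.aForm_le {ε M Q1 Q2 : ℝ} {R : Fin m → ℝ}
    (hc : LinftyCoeffs (volume.restrict Ω) P Rv q1 q2) (hε : 0 < ε)
    (hP : ∀ᵐ x ∂(volume.restrict Ω), ∀ i j, |P x i j| ≤ M)
    (hRv : ∀ᵐ x ∂(volume.restrict Ω), ∀ k, |Rv x k| ≤ R k)
    (hq1 : ∀ᵐ x ∂(volume.restrict Ω), |q1 x| ≤ Q1) (hq2 : ∀ᵐ x ∂(volume.restrict Ω), |q2 x| ≤ Q2)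
    (hu1 : C1c m Ω u1) (hu2 : C1c m Ω u2) (hv1 : C1c m Ω v1) (hv2 : C1c m Ω v2) :
    aForm m Ω P Rv q1 q2 u1 u2 v1 v2 ≤
      2 * ε * (normH1 m Ω u1 ^ 2 + normH1 m Ω u2 ^ 2) +
        (m ^ 2 * M ^ 2 + ∑ k, R k ^ 2 + Q1 ^ 2 + Q2 ^ 2) / (4 * ε) *
          (normH1 m Ω v1 ^ 2 + normH1 m Ω v2 ^ 2) := by
  have hHu : Integrable (fun x => h1Density u1 x + h1Density u2 x) (volume.restrict Ω) :=
    hu1.integrable_h1Density.add hu2.integrable_h1Density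
  have hHv : Integrable (fun x => h1Density v1 x + h1Density v2 x) (volume.restrict Ω) :=
    hv1.integrable_h1Density.add hv2.integrable_h1Density
  rw [hu1.normH1_sq, hu2.normH1_sq, hv1.normH1_sq, hv2.normH1_sq,
    ← integral_add hu1.integrable_h1Density hu2.integrable_h1Density,
    ← integral_add hv1.integrable_h1Density hv2.integrable_h1Density, ← integral_const_mul,
    ← integral_const_mul, ← integral_add (hHu.const_mul _) (hHv.const_mul _),
    hc.aForm_eq_integral hu1 hu2 hv1 hv2]
  refine integral_mono_ae ((hc.memLp_aDensity hu1 hu2 hv1 hv2).integrable le_top)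
    ((hHu.const_mul _).add (hHv.const_mul _)) ?_
  filter_upwards [hP, hRv, hq1, hq2] with x hPx hRx hq1x hq2x
  exact aDensity_le hε hPx hRx hq1x hq2x

theorem LinftyCoeffs.sum_normH1_sq_le_of_galerkin {α M Q1 Q2 : ℝ} {R : Fin m → ℝ}
    {e1 e2 z1 z2 : (Fin m → ℝ) → ℝ} (hc : LinftyCoeffs (volume.restrict Ω) P Rv q1 q2)
    (hα : 0 < α) (hPM : ∀ᵐ x ∂(volume.restrict Ω), ∀ i j, |P x i j| ≤ M)
    (hPα : ∀ᵐ x ∂(volume.restrict Ω), ∀ ξ : Fin m → ℝ, α * ∑ i, ξ i ^ 2 ≤ ξ ⬝ᵥ (P x).mulVec ξ)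
    (hRv : ∀ᵐ x ∂(volume.restrict Ω), ∀ k, |Rv x k| ≤ R k)
    (hq1 : ∀ᵐ x ∂(volume.restrict Ω), |q1 x| ≤ Q1) (hq2 : ∀ᵐ x ∂(volume.restrict Ω), |q2 x| ≤ Q2)
    (hq1α : ∀ᵐ x ∂(volume.restrict Ω), α / 2 + (∑ k, R k ^ 2) / (2 * α) ≤ q1 x)
    (he1 : C1c m Ω e1) (he2 : C1c m Ω e2) (hz1 : C1c m Ω z1) (hz2 : C1c m Ω z2)
    (hgal : aForm m Ω P Rv q1 q2 e1 e2 (z1 - e1) (z2 - e2) = 0) :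
    normH1 m Ω e1 ^ 2 + normH1 m Ω e2 ^ 2 ≤
      8 * (m ^ 2 * M ^ 2 + ∑ k, R k ^ 2 + Q1 ^ 2 + Q2 ^ 2) / α ^ 2 *
        (normH1 m Ω z1 ^ 2 + normH1 m Ω z2 ^ 2) := by
  have hcoer := hc.aForm_self_ge hα hPα hRv hq1α he1 he2
  have hcont := hc.aForm_le (ε := α / 8) (by positivity) hPM hRv hq1 hq2 he1 he2 hz1 hz2
  rw [hc.aForm_sub_right he1 he2 hz1 hz2 he1 he2] at hgal
  set Γ : ℝ := m ^ 2 * M ^ 2 + ∑ k, R k ^ 2 + Q1 ^ 2 + Q2 ^ 2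
  set Ne := normH1 m Ω e1 ^ 2 + normH1 m Ω e2 ^ 2
  set Nz := normH1 m Ω z1 ^ 2 + normH1 m Ω z2 ^ 2
  rw [show Γ / (4 * (α / 8)) = 2 * Γ / α by field_simp; ring] at hcont
  have hNe : α / 4 * Ne ≤ 2 * Γ / α * Nz := by linarith
  calc Ne = 4 / α * (α / 4 * Ne) := by field_simp
    _ ≤ 4 / α * (2 * Γ / α * Nz) := by gcongr
    _ = 8 * Γ / α ^ 2 * Nz := by field_simp; ring

end Form

theorem stmt7_general (m : ℕ) (α : ℝ) (hα : 0 < α) (M : ℝ) (R : Fin m → ℝ)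
    (Q1 Q2 : ℝ) (B : ℝ) (hB : B = Real.sqrt (∑ k, (R k) ^ 2)) :
    ∃ C : ℝ, 0 ≤ C ∧
      ∀ (Ω : Set (Fin m → ℝ)), IsOpen Ω → Bornology.IsBounded Ω →
      ∀ (P : (Fin m → ℝ) → Matrix (Fin m) (Fin m) ℝ),
        (∀ i j, Measurable fun x => P x i j) →
        (∀ᵐ x ∂(volume.restrict Ω), ∀ i j, |P x i j| ≤ M) →
        (∀ᵐ x ∂(volume.restrict Ω), (P x).IsSymm) →
        (∀ᵐ x ∂(volume.restrict Ω), ∀ ξ : Fin m → ℝ,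
          α * ∑ i, (ξ i) ^ 2 ≤ ξ ⬝ᵥ (P x).mulVec ξ) →
      ∀ (Rv : (Fin m → ℝ) → Fin m → ℝ),
        (∀ k, Measurable fun x => Rv x k) →
        (∀ᵐ x ∂(volume.restrict Ω), ∀ k, |Rv x k| ≤ R k) →
      ∀ (q1 q2 : (Fin m → ℝ) → ℝ), Measurable q1 → Measurable q2 →
        (∀ᵐ x ∂(volume.restrict Ω), |q1 x| ≤ Q1) →
        (∀ᵐ x ∂(volume.restrict Ω), |q2 x| ≤ Q2) →
        (∀ᵐ x ∂(volume.restrict Ω), α / 2 + B ^ 2 / (2 * α) ≤ q1 x) →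
      ∀ u1 u2 u1h u2h w1 w2 : (Fin m → ℝ) → ℝ,
        C1c m Ω u1 → C1c m Ω u2 → C1c m Ω u1h → C1c m Ω u2h →
        C1c m Ω w1 → C1c m Ω w2 →
        aForm m Ω P Rv q1 q2 (u1 - u1h) (u2 - u2h) (u1h - w1) (u2h - w2) = 0 →
        (normH1 m Ω (u1 - u1h)) ^ 2 + (normH1 m Ω (u2 - u2h)) ^ 2 ≤
          C * ((normH1 m Ω (u1 - w1)) ^ 2 + (normH1 m Ω (u2 - w2)) ^ 2) := by
  refine ⟨8 * (m ^ 2 * M ^ 2 + ∑ k, R k ^ 2 + Q1 ^ 2 + Q2 ^ 2) / α ^ 2, by positivity, ?_⟩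
  intro Ω _ hΩ P hPm hP _ hPα Rv hRvm hRv q1 q2 hq1m hq2m hq1 hq2 hq1α
    u1 u2 u1h u2h w1 w2 hu1 hu2 hu1h hu2h hw1 hw2 hgal
  have : IsFiniteMeasure (volume.restrict Ω) := ⟨by simpa using hΩ.measure_lt_top⟩
  have hc := LinftyCoeffs.of_ae_bound hPm hP hRvm hRv hq1m hq2m hq1 hq2
  rw [hB, Real.sq_sqrt (by positivity)] at hq1α
  -- with `e = u - uh` and `z = u - w`, the test function `uh - w` is `z - e`
  rw [show u1h - w1 = (u1 - w1) - (u1 - u1h) by abel,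
    show u2h - w2 = (u2 - w2) - (u2 - u2h) by abel] at hgal
  exact hc.sum_normH1_sq_le_of_galerkin hα hP hPα hRv hq1 hq2 hq1α (hu1.sub hu1h) (hu2.sub hu2h)
    (hu1.sub hw1) (hu2.sub hw2) hgal

theorem stmt7 (m : ℕ) (hm : 1 ≤ m) (α : ℝ) (hα : 0 < α) (M : ℝ) (R : Fin m → ℝ)
    (Q1 Q2 : ℝ) (B : ℝ) (hB : B = Real.sqrt (∑ k, (R k) ^ 2)) :
    ∃ C : ℝ, 0 ≤ C ∧
      ∀ (Ω : Set (Fin m → ℝ)), IsOpen Ω → Bornology.IsBounded Ω →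
      ∀ (P : (Fin m → ℝ) → Matrix (Fin m) (Fin m) ℝ),
        (∀ i j, Measurable fun x => P x i j) →
        (∀ᵐ x ∂(volume.restrict Ω), ∀ i j, |P x i j| ≤ M) →
        (∀ᵐ x ∂(volume.restrict Ω), (P x).IsSymm) →
        (∀ᵐ x ∂(volume.restrict Ω), ∀ ξ : Fin m → ℝ,
          α * ∑ i, (ξ i) ^ 2 ≤ ξ ⬝ᵥ (P x).mulVec ξ) →
      ∀ (Rv : (Fin m → ℝ) → Fin m → ℝ),
        (∀ k, Measurable fun x => Rv x k) →
        (∀ᵐ x ∂(volume.restrict Ω), ∀ k, |Rv x k| ≤ R k) →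
      ∀ (q1 q2 : (Fin m → ℝ) → ℝ), Measurable q1 → Measurable q2 →
        (∀ᵐ x ∂(volume.restrict Ω), |q1 x| ≤ Q1) →
        (∀ᵐ x ∂(volume.restrict Ω), |q2 x| ≤ Q2) →
        (∀ᵐ x ∂(volume.restrict Ω), α / 2 + B ^ 2 / (2 * α) ≤ q1 x) →
      ∀ u1 u2 u1h u2h w1 w2 : (Fin m → ℝ) → ℝ,
        C1c m Ω u1 → C1c m Ω u2 → C1c m Ω u1h → C1c m Ω u2h →
        C1c m Ω w1 → C1c m Ω w2 →
        aForm m Ω P Rv q1 q2 (u1 - u1h) (u2 - u2h) (u1h - w1) (u2h - w2) = 0 →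
        (normH1 m Ω (u1 - u1h)) ^ 2 + (normH1 m Ω (u2 - u2h)) ^ 2 ≤
          C * ((normH1 m Ω (u1 - w1)) ^ 2 + (normH1 m Ω (u2 - w2)) ^ 2) :=
  stmt7_general m α hα M R Q1 Q2 B hB
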